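/- The function g(θ₂) = arcsin(min(ε + sin θ₂, 1)) − arcsin(max(−ε + sin θ₂, −1)), defined for θ₂ ∈ [0, π/2) and fixed ε ∈ (0, 1), is strictly increasing in θ₂ on the region where both ε + sinθ₂ ≤ 1 and −ε + sinθ₂ ≥ −1, i.e., beams steered at larger elevation angles have larger half-power beamwidth. -/

import Mathlib

open Real Set

lemma one_div_sqrt_one_sub_sq_lt {x y : ℝ} (hxy : |x| < |y|) (hy : |y| < 1) :
    1 / √(1 - x ^ 2) < 1 / √(1 - y ^ 2) := by
  have hy2 : y ^ 2 < 1 := by simpa using sq_lt_sq.mpr (hy.trans_eq (abs_one).symm)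
  have hxy2 : x ^ 2 < y ^ 2 := sq_lt_sq.mpr hxy
  gcongr

lemma strictMonoOn_arcsin_add_sub_arcsin_sub {ε : ℝ} (hε : 0 < ε) :
    StrictMonoOn (fun s : ℝ => arcsin (ε + s) - arcsin (-ε + s)) (Icc 0 (1 - ε)) := by
  refine strictMonoOn_of_deriv_pos (convex_Icc _ _) (by fun_prop) fun s hs => ?_
  rw [interior_Icc] at hs
  obtain ⟨hs0, hs1⟩ := hs
  have hderiv : HasDerivAt (fun s : ℝ => arcsin (ε + s) - arcsin (-ε + s))
      (1 / √(1 - (ε + s) ^ 2) - 1 / √(1 - (-ε + s) ^ 2)) s := by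
    have hplus := (hasDerivAt_arcsin (x := ε + s) (by linarith) (by linarith)).comp s
      ((hasDerivAt_id s).const_add ε)
    have hminus := (hasDerivAt_arcsin (x := -ε + s) (by linarith) (by linarith)).comp s
      ((hasDerivAt_id s).const_add (-ε))
    rw [mul_one] at hplus hminus
    exact hplus.sub hminus
  rw [hderiv.deriv, sub_pos]
  -- `s > 0` puts `-ε + s` strictly closer to `0` than `ε + s`, where `arcsin` is flattest.
  refine one_div_sqrt_one_sub_sq_lt ?_ ?_
  · rw [abs_of_pos (by linarith : 0 < ε + s), abs_lt]
    constructor <;> linarith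
  · rw [abs_lt]
    constructor <;> linarith

/-- The half-power beamwidth is strictly increasing in the steering elevation angle. -/
theorem stmt_6 (ε : ℝ) (hε : ε ∈ Set.Ioo (0 : ℝ) 1) :
    StrictMonoOn
      (fun θ₂ : ℝ =>
        Real.arcsin (min (ε + Real.sin θ₂) 1) -
          Real.arcsin (max (-ε + Real.sin θ₂) (-1)))
      {θ₂ : ℝ | θ₂ ∈ Set.Ico 0 (Real.pi / 2) ∧
        ε + Real.sin θ₂ ≤ 1 ∧ -1 ≤ -ε + Real.sin θ₂} := by
  rintro x ⟨⟨hx0, hxπ⟩, hx_top, hx_bot⟩ y ⟨⟨hy0, hyπ⟩, hy_top, hy_bot⟩ hxy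
  have hsin : sin x < sin y :=
    strictMonoOn_sin ⟨by linarith [pi_pos], hxπ.le⟩ ⟨by linarith [pi_pos], hyπ.le⟩ hxy
  have hsin_nonneg {θ : ℝ} (h0 : 0 ≤ θ) (hπ : θ < π / 2) : 0 ≤ sin θ :=
    sin_nonneg_of_nonneg_of_le_pi h0 (by linarith [pi_pos])
  simp only [min_eq_left hx_top, min_eq_left hy_top, max_eq_left hx_bot, max_eq_left hy_bot]
  exact strictMonoOn_arcsin_add_sub_arcsin_sub hε.1
    ⟨hsin_nonneg hx0 hxπ, by linarith⟩ ⟨hsin_nonneg hy0 hyπ, by linarith⟩ hsin
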